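/- The Banach lattice c₀ does not have the Brezis–Lieb property: there exist a disjoint normalized sequence (uₙ) in c₀₊ and u₀ > 0 with limsup ‖u₀ + uₙ‖ = ‖u₀‖. -/

import Mathlib

/-!
The norm of `c₀` is a supremum, so a unit vector supported away from the support of `u₀` adds
nothing to it: with `e_k` the standard unit vectors, `‖e₀ + e_{n+1}‖ = max 1 1 = ‖e₀‖` for every
`n`, while `(e_{n+1})` is a disjoint normalized sequence of positive elements.
-/

open Filter Topology MeasureTheory
open scoped ZeroAtInfty

/-- Order convergence of a net (indexed by a preordered type) in a lattice-ordered group: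
there is a net decreasing to `0` eventually dominating `|x α - x₀|`. -/
def OrderConvNet {E : Type*} [Lattice E] [AddCommGroup E] {ι : Type*} [Preorder ι]
    (x : ι → E) (x₀ : E) : Prop :=
  ∃ z : ι → E, Antitone z ∧ IsGLB (Set.range z) 0 ∧ ∀ᶠ α in atTop, |x α - x₀| ≤ z α

/-- Unbounded order convergence of a net. -/
def UOConvNet {E : Type*} [Lattice E] [AddCommGroup E] {ι : Type*} [Preorder ι]
    (x : ι → E) (x₀ : E) : Prop :=
  ∀ u : E, 0 ≤ u → OrderConvNet (fun α => |x α - x₀| ⊓ u) 0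

/-- A normed lattice is a Brezis–Lieb space if `uo`-convergence together with convergence
of norms implies norm convergence, for all nets. -/
def IsBLSpace (E : Type*) [NormedAddCommGroup E] [Lattice E] : Prop :=
  ∀ (ι : Type) [Preorder ι] [IsDirected ι (· ≤ ·)] [Nonempty ι],
    ∀ (x : ι → E) (x₀ : E), UOConvNet x x₀ →
      Tendsto (fun α => ‖x α‖) atTop (𝓝 ‖x₀‖) →
      Tendsto (fun α => ‖x α - x₀‖) atTop (𝓝 0)

/-- σ-Brezis–Lieb space: the same for sequences. -/
def IsSigmaBLSpace (E : Type*) [NormedAddCommGroup E] [Lattice E] : Prop :=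
  ∀ (x : ℕ → E) (x₀ : E), UOConvNet x x₀ →
    Tendsto (fun n => ‖x n‖) atTop (𝓝 ‖x₀‖) →
    Tendsto (fun n => ‖x n - x₀‖) atTop (𝓝 0)

/-- The Brezis–Lieb property of a normed lattice. -/
def HasBLProperty (E : Type*) [NormedAddCommGroup E] [Lattice E] : Prop :=
  ∀ (u : ℕ → E) (u₀ : E), (∀ n, 0 ≤ u n) → (∀ n, ‖u n‖ = 1) →
    (Pairwise fun n m => u n ⊓ u m = 0) → 0 < u₀ →
    ‖u₀‖ < limsup (fun n => ‖u₀ + u n‖) atTop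

/-- The norm is order continuous: every net decreasing to `0` converges to `0` in norm. -/
def HasOrderContinuousNorm (E : Type*) [NormedAddCommGroup E] [Lattice E] : Prop :=
  ∀ (ι : Type) [Preorder ι] [IsDirected ι (· ≤ ·)] [Nonempty ι],
    ∀ x : ι → E, Antitone x → IsGLB (Set.range x) 0 →
      Tendsto (fun α => ‖x α‖) atTop (𝓝 0)

/-- σ-Dedekind completeness: every order bounded sequence has a supremum. -/
def SigmaDedekindComplete (E : Type*) [Lattice E] : Prop :=
  ∀ (f : ℕ → E) (b : E), (∀ n, f n ≤ b) → ∃ s, IsLUB (Set.range f) s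

open ZeroAtInftyContinuousMap in
noncomputable instance : Max C₀(ℕ, ℝ) :=
  ⟨fun f g =>
    { toFun := fun n => f n ⊔ g n
      continuous_toFun := continuous_of_discreteTopology
      zero_at_infty' := by simpa using (zero_at_infty f).max (zero_at_infty g) }⟩

open ZeroAtInftyContinuousMap in
noncomputable instance : Min C₀(ℕ, ℝ) :=
  ⟨fun f g =>
    { toFun := fun n => f n ⊓ g n
      continuous_toFun := continuous_of_discreteTopology
      zero_at_infty' := by simpa using (zero_at_infty f).min (zero_at_infty g) }⟩

instance : LE C₀(ℕ, ℝ) :=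
  ⟨fun f g => (f : ℕ → ℝ) ≤ g⟩

instance : LT C₀(ℕ, ℝ) :=
  ⟨fun f g => (f : ℕ → ℝ) < g⟩

/-- The pointwise lattice structure on `c₀ = C₀(ℕ, ℝ)`. -/
noncomputable instance : Lattice C₀(ℕ, ℝ) :=
  DFunLike.coe_injective.lattice _ Iff.rfl Iff.rfl (fun _ _ => rfl) (fun _ _ => rfl)

namespace ZeroAtInftyContinuousMap

variable {X β : Type*} [TopologicalSpace X] [NormedAddCommGroup β]

theorem norm_eq_of_norm_apply_le {f : C₀(X, β)} {C : ℝ} (x₀ : X)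
    (hle : ∀ x, ‖f x‖ ≤ C) (hx₀ : ‖f x₀‖ = C) : ‖f‖ = C := by
  rw [← norm_toBCF_eq_norm]
  refine le_antisymm ((BoundedContinuousFunction.norm_le (hx₀ ▸ norm_nonneg _)).2 hle) ?_
  exact hx₀ ▸ f.toBCF.norm_coe_le_norm x₀

variable [DiscreteTopology X] [DecidableEq X]

noncomputable def single (k : X) (b : β) : C₀(X, β) where
  toFun := (Pi.single k b : X → β)
  continuous_toFun := continuous_of_discreteTopology
  zero_at_infty' := by
    rw [cocompact_eq_cofinite]
    refine tendsto_const_nhds.congr' ?_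
    filter_upwards [(Set.finite_singleton k).compl_mem_cofinite] with x hx
    exact (Pi.single_eq_of_ne (M := fun _ => β) hx b).symm

@[simp]
theorem single_apply (k : X) (b : β) (x : X) : single k b x = (Pi.single k b : X → β) x := rfl

@[simp]
theorem norm_single (k : X) (b : β) : ‖single k b‖ = ‖b‖ := by
  refine norm_eq_of_norm_apply_le k (fun x => ?_) (by simp)
  rcases eq_or_ne x k with rfl | hx
  · simp
  · simp [hx]

theorem norm_single_add_single {j k : X} (hjk : j ≠ k) (a b : β) :
    ‖single j a + single k b‖ = max ‖a‖ ‖b‖ := by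
  have hle : ∀ x, ‖(single j a + single k b) x‖ ≤ max ‖a‖ ‖b‖ := by
    intro x
    rcases eq_or_ne x j with rfl | hxj
    · simp [hjk]
    rcases eq_or_ne x k with rfl | hxk
    · simp [hxj]
    · simp [hxj, hxk]
  rcases le_total ‖a‖ ‖b‖ with hab | hab
  · exact norm_eq_of_norm_apply_le k hle (by simp [hjk.symm, hab])
  · exact norm_eq_of_norm_apply_le j hle (by simp [hjk, hab])

theorem single_nonneg (k : ℕ) {b : ℝ} (hb : 0 ≤ b) : 0 ≤ single k b := fun n => by
  rcases eq_or_ne n k with rfl | hn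
  · simpa using hb
  · simp [hn]

theorem single_pos (k : ℕ) {b : ℝ} (hb : 0 < b) : 0 < single k b :=
  (single_nonneg k hb.le).lt_of_ne fun h => hb.ne' (by simpa using congr($h k).symm)

theorem single_inf_single {j k : ℕ} (hjk : j ≠ k) {a b : ℝ} (ha : 0 ≤ a) (hb : 0 ≤ b) :
    single j a ⊓ single k b = 0 := by
  ext n
  show single j a n ⊓ single k b n = 0
  rcases eq_or_ne n j with rfl | hnj
  · simp [hjk, ha]
  · rcases eq_or_ne n k with rfl | hnk
    · simp [hnj, hb]
    · simp [hnj, hnk]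

end ZeroAtInftyContinuousMap

open ZeroAtInftyContinuousMap

theorem not_hasBLProperty_of_limsup_eq {E : Type*} [NormedAddCommGroup E] [Lattice E]
    (u : ℕ → E) (u₀ : E) (hu : ∀ n, 0 ≤ u n) (hnorm : ∀ n, ‖u n‖ = 1)
    (hdisj : Pairwise fun n m => u n ⊓ u m = 0) (hu₀ : 0 < u₀)
    (hlim : limsup (fun n => ‖u₀ + u n‖) atTop = ‖u₀‖) : ¬ HasBLProperty E :=
  fun h => (h u u₀ hu hnorm hdisj hu₀).ne' hlim

/-- The Banach lattice `c₀` (here `C₀(ℕ, ℝ)`) does not have the Brezis–Lieb property: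
there are a disjoint normalized sequence `(uₙ)` of positive elements and `u₀ > 0` with
`limsup ‖u₀ + uₙ‖ = ‖u₀‖`. -/
theorem c0_not_hasBLProperty :
    ¬ HasBLProperty C₀(ℕ, ℝ) ∧
      ∃ (u : ℕ → C₀(ℕ, ℝ)) (u₀ : C₀(ℕ, ℝ)),
        (∀ n, 0 ≤ u n) ∧ (∀ n, ‖u n‖ = 1) ∧ (Pairwise fun n m => u n ⊓ u m = 0) ∧
        0 < u₀ ∧ limsup (fun n => ‖u₀ + u n‖) atTop = ‖u₀‖ := by
  let u : ℕ → C₀(ℕ, ℝ) := fun n => single (n + 1) 1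
  let u₀ : C₀(ℕ, ℝ) := single 0 1
  have hu : ∀ n, 0 ≤ u n := fun n => single_nonneg _ zero_le_one
  have hu₀ : 0 < u₀ := single_pos 0 one_pos
  have hnorm : ∀ n, ‖u n‖ = 1 := fun n => by simp [u]
  have hdisj : Pairwise fun n m => u n ⊓ u m = 0 := fun n m hnm =>
    single_inf_single (by omega) zero_le_one zero_le_one
  have hsum : ∀ n, ‖u₀ + u n‖ = ‖u₀‖ := fun n => by
    simp [u, u₀, norm_single_add_single (Nat.succ_ne_zero n).symm]
  have hlim : limsup (fun n => ‖u₀ + u n‖) atTop = ‖u₀‖ := by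
    simp only [hsum, limsup_const]
  exact ⟨not_hasBLProperty_of_limsup_eq u u₀ hu hnorm hdisj hu₀ hlim,
    u, u₀, hu, hnorm, hdisj, hu₀, hlim⟩
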